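/- arXiv:2103.14735 — 2 statements merged into one kernel-verified Lean document; each statement's English description precedes it below -/
import Mathlib

section
/- For p ≥ 2 and vectors a, b ∈ ℝ^n, the monotonicity inequality (|a|^{p−2} a − |b|^{p−2} b) · (a − b) ≥ 0 holds; in fact (|a|^{p−2} a − |b|^{p−2} b) · (a − b) ≥ 2^{2−p} |a − b|^p. -/
/-!
With `s = ‖a‖`, `t = ‖b‖` and `d = ‖a - b‖`, the inner product equals
`((s ^ (p - 2) + t ^ (p - 2)) d² + (s ^ (p - 2) - t ^ (p - 2)) (s² - t²)) / 2`, which is affine in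
`d²`, while `2 ^ (2 - p) d ^ p` is convex in `d²`. As `|s - t| ≤ d ≤ s + t`, it suffices to check
the two collinear configurations: `d = s + t` is the power mean inequality
`(s + t) ^ (p - 1) ≤ 2 ^ (p - 2) (s ^ (p - 1) + t ^ (p - 1))`, and `d = s - t` is the
superadditivity of `x ↦ x ^ (p - 1)` together with `2 ^ (2 - p) ≤ 1`.
-/

open Real Set

lemma Real.rpow_add_le_mul_rpow_add_rpow {p s t : ℝ} (hp : 1 ≤ p) (hs : 0 ≤ s) (ht : 0 ≤ t) :
    (s + t) ^ p ≤ 2 ^ (p - 1) * (s ^ p + t ^ p) := by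
  lift s to NNReal using hs
  lift t to NNReal using ht
  exact_mod_cast NNReal.rpow_add_le_mul_rpow_add_rpow s t hp

lemma Real.rpow_sub_one_mul_self {x p : ℝ} (hx : 0 ≤ x) (hp : p ≠ 0) :
    x ^ (p - 1) * x = x ^ p := by
  rw [← rpow_add_one' hx (by simpa), sub_add_cancel]

lemma Real.sq_rpow_div_two (x p : ℝ) : (x ^ 2) ^ (p / 2) = |x| ^ p := by
  rw [← sq_abs, ← rpow_natCast_mul (abs_nonneg x), Nat.cast_ofNat, mul_div_cancel₀ p two_ne_zero]

lemma ConvexOn.le_affine_of_mem_Icc {s : Set ℝ} {f : ℝ → ℝ} (hf : ConvexOn ℝ s f)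
    {x y z m k : ℝ} (hx : x ∈ s) (hy : y ∈ s) (hz : z ∈ Icc x y)
    (hfx : f x ≤ m * x + k) (hfy : f y ≤ m * y + k) : f z ≤ m * z + k := by
  have hg : ConvexOn ℝ s (fun u ↦ f u - (m * u + k)) :=
    hf.sub (((LinearMap.mulLeft ℝ m).concaveOn hf.1).add (concaveOn_const k hf.1))
  exact sub_nonpos.1 <|
    (hg.le_max_of_mem_Icc hx hy hz).trans (max_le (sub_nonpos.2 hfx) (sub_nonpos.2 hfy))

lemma two_rpow_mul_add_rpow_le {p s t : ℝ} (hp : 2 ≤ p) (hs : 0 ≤ s) (ht : 0 ≤ t) :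
    2 ^ (2 - p) * (s + t) ^ p ≤ (s + t) * (s ^ (p - 1) + t ^ (p - 1)) := by
  have hst : 0 ≤ s + t := add_nonneg hs ht
  calc 2 ^ (2 - p) * (s + t) ^ p = 2 ^ (2 - p) * (s + t) ^ (p - 1) * (s + t) := by
        rw [mul_assoc, rpow_sub_one_mul_self hst (by linarith)]
    _ ≤ 2 ^ (2 - p) * (2 ^ (p - 1 - 1) * (s ^ (p - 1) + t ^ (p - 1))) * (s + t) := by
        gcongr
        exact rpow_add_le_mul_rpow_add_rpow (by linarith) hs ht
    _ = (s + t) * (s ^ (p - 1) + t ^ (p - 1)) := by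
        rw [← mul_assoc, ← rpow_add two_pos, show 2 - p + (p - 1 - 1) = 0 by ring, rpow_zero,
          one_mul, mul_comm]

lemma two_rpow_mul_sub_rpow_le {p s t : ℝ} (hp : 2 ≤ p) (ht : 0 ≤ t) (hts : t ≤ s) :
    2 ^ (2 - p) * (s - t) ^ p ≤ (s - t) * (s ^ (p - 1) - t ^ (p - 1)) := by
  have hst : 0 ≤ s - t := sub_nonneg.2 hts
  have hsuper : (s - t) ^ (p - 1) + t ^ (p - 1) ≤ s ^ (p - 1) := by
    simpa using add_rpow_le_rpow_add hst ht (by linarith : 1 ≤ p - 1)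
  calc 2 ^ (2 - p) * (s - t) ^ p ≤ 1 * (s - t) ^ p := by
        gcongr
        exact rpow_le_one_of_one_le_of_nonpos one_le_two (by linarith)
    _ = (s - t) * (s - t) ^ (p - 1) := by
        rw [one_mul, mul_comm, rpow_sub_one_mul_self hst (by linarith)]
    _ ≤ (s - t) * (s ^ (p - 1) - t ^ (p - 1)) := by
        gcongr
        linarith

lemma two_rpow_mul_rpow_le_of_abs_sub_le_of_le_add {p s t d : ℝ} (hp : 2 ≤ p) (hs : 0 ≤ s)
    (ht : 0 ≤ t) (hd₀ : |s - t| ≤ d) (hd₁ : d ≤ s + t) :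
    2 ^ (2 - p) * d ^ p ≤
      ((s ^ (p - 2) + t ^ (p - 2)) * d ^ 2 + (s ^ (p - 2) - t ^ (p - 2)) * (s ^ 2 - t ^ 2)) / 2 := by
  wlog hts : t ≤ s generalizing s t
  · convert this ht hs (by rwa [abs_sub_comm]) (by rwa [add_comm]) (le_of_not_ge hts) using 1
    ring
  have hd : 0 ≤ d := (abs_nonneg _).trans hd₀
  have hs₁ : s ^ (p - 2) * s = s ^ (p - 1) := by
    rw [show p - 2 = p - 1 - 1 by ring, rpow_sub_one_mul_self hs (by linarith)]
  have ht₁ : t ^ (p - 2) * t = t ^ (p - 1) := by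
    rw [show p - 2 = p - 1 - 1 by ring, rpow_sub_one_mul_self ht (by linarith)]
  have hf : ConvexOn ℝ (Ici 0) (fun u : ℝ ↦ 2 ^ (2 - p) * u ^ (p / 2)) :=
    (convexOn_rpow (by linarith)).smul (by positivity)
  have hd₂ : d ^ 2 ∈ Icc ((s - t) ^ 2) ((s + t) ^ 2) :=
    ⟨sq_abs (s - t) ▸ pow_le_pow_left₀ (abs_nonneg _) hd₀ 2, pow_le_pow_left₀ hd hd₁ 2⟩
  have key := hf.le_affine_of_mem_Icc (m := (s ^ (p - 2) + t ^ (p - 2)) / 2)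
    (k := (s ^ (p - 2) - t ^ (p - 2)) * (s ^ 2 - t ^ 2) / 2) (mem_Ici.2 (sq_nonneg _))
    (mem_Ici.2 (sq_nonneg _)) hd₂ ?_ ?_
  · simp only [sq_rpow_div_two, abs_of_nonneg hd] at key
    linarith
  · simp only [sq_rpow_div_two, abs_of_nonneg (sub_nonneg.2 hts)]
    convert two_rpow_mul_sub_rpow_le hp ht hts using 1
    rw [← hs₁, ← ht₁]
    ring
  · simp only [sq_rpow_div_two, abs_of_nonneg (add_nonneg hs ht)]
    convert two_rpow_mul_add_rpow_le hp hs ht using 1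
    rw [← hs₁, ← ht₁]
    ring

lemma inner_smul_sub_smul_sub {E : Type*} [NormedAddCommGroup E] [InnerProductSpace ℝ E]
    (α β : ℝ) (a b : E) :
    inner ℝ (α • a - β • b) (a - b) =
      ((α + β) * ‖a - b‖ ^ 2 + (α - β) * (‖a‖ ^ 2 - ‖b‖ ^ 2)) / 2 := by
  simp only [inner_sub_left, inner_sub_right, real_inner_smul_left, real_inner_self_eq_norm_sq,
    real_inner_comm b a, norm_sub_sq_real]
  ring

lemma two_rpow_mul_norm_sub_rpow_le_inner {E : Type*} [NormedAddCommGroup E]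
    [InnerProductSpace ℝ E] {p : ℝ} (hp : 2 ≤ p) (a b : E) :
    2 ^ (2 - p) * ‖a - b‖ ^ p ≤ inner ℝ (‖a‖ ^ (p - 2) • a - ‖b‖ ^ (p - 2) • b) (a - b) := by
  rw [inner_smul_sub_smul_sub]
  exact two_rpow_mul_rpow_le_of_abs_sub_le_of_le_add hp (norm_nonneg a) (norm_nonneg b)
    (abs_norm_sub_norm_le a b) (norm_sub_le a b)

theorem pLaplace_monotonicity (n : ℕ) (p : ℝ) (hp : 2 ≤ p)
    (a b : EuclideanSpace ℝ (Fin n)) :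
    (0 : ℝ) ≤ inner ℝ (‖a‖ ^ (p - 2) • a - ‖b‖ ^ (p - 2) • b) (a - b) ∧
    (2 : ℝ) ^ (2 - p) * ‖a - b‖ ^ p ≤
      (inner ℝ (‖a‖ ^ (p - 2) • a - ‖b‖ ^ (p - 2) • b) (a - b) : ℝ) := by
  have h := two_rpow_mul_norm_sub_rpow_le_inner hp a b
  exact ⟨(by positivity : (0 : ℝ) ≤ 2 ^ (2 - p) * ‖a - b‖ ^ p).trans h, h⟩
end

section
/- For p ≥ 2 and vectors a, b ∈ ℝ^n, one has | |a|^{p−2} a − |b|^{p−2} b | ≤ (p−1) (|a| + |b|)^{p−2} |a − b|. -/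
/-!
Write `‖a‖^q a - ‖b‖^q b = ‖a‖^q (a - b) + (‖a‖^q - ‖b‖^q) b` with `‖b‖ ≤ ‖a‖`. The first term is
at most `‖a‖^q ‖a - b‖`; for the second, the mean value theorem gives `s^q - t^q = q c^(q-1) (s - t)`
with `t < c < s`, so `t (s^q - t^q) ≤ q c^q (s - t) ≤ q s^q ‖a - b‖`. Altogether the flux difference
is at most `(q + 1) ‖a‖^q ‖a - b‖`, and `‖a‖ ≤ ‖a‖ + ‖b‖`.
-/

open Real

lemma mul_rpow_sub_rpow_le {q s t : ℝ} (hq : 0 ≤ q) (ht : 0 ≤ t) (hts : t ≤ s) :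
    t * (s ^ q - t ^ q) ≤ q * s ^ q * (s - t) := by
  rcases ht.eq_or_lt with rfl | ht
  · simpa using mul_nonneg (mul_nonneg hq (rpow_nonneg hts q)) hts
  rcases hts.eq_or_lt with rfl | hts
  · simp
  obtain ⟨c, ⟨htc, hcs⟩, hc⟩ := exists_hasDerivAt_eq_slope (fun x => x ^ q)
    (fun x => q * x ^ (q - 1)) hts
    (fun x hx => (continuousAt_rpow_const x q
      (Or.inl (ht.trans_le hx.1).ne')).continuousWithinAt)
    (fun x hx => hasDerivAt_rpow_const (Or.inl (ht.trans hx.1).ne'))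
  have hc0 : 0 < c := ht.trans htc
  have hmvt : s ^ q - t ^ q = q * c ^ (q - 1) * (s - t) :=
    (div_eq_iff (sub_pos.mpr hts).ne').mp hc.symm
  have hweight : t * c ^ (q - 1) ≤ s ^ q :=
    calc t * c ^ (q - 1) ≤ c * c ^ (q - 1) := by gcongr
      _ = c ^ q := by rw [mul_comm, ← rpow_add_one hc0.ne', sub_add_cancel]
      _ ≤ s ^ q := rpow_le_rpow hc0.le hcs.le hq
  calc t * (s ^ q - t ^ q) = q * (t * c ^ (q - 1)) * (s - t) := by rw [hmvt]; ring
    _ ≤ q * s ^ q * (s - t) := by gcongr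

section NormedSpace

variable {E : Type*} [NormedAddCommGroup E] [NormedSpace ℝ E]

lemma norm_rpow_smul_sub_rpow_smul_le_of_norm_le {q : ℝ} (hq : 0 ≤ q) {a b : E}
    (hba : ‖b‖ ≤ ‖a‖) :
    ‖‖a‖ ^ q • a - ‖b‖ ^ q • b‖ ≤ (q + 1) * ‖a‖ ^ q * ‖a - b‖ := by
  have hpow : ‖b‖ ^ q ≤ ‖a‖ ^ q := rpow_le_rpow (norm_nonneg b) hba hq
  have hsplit : ‖a‖ ^ q • a - ‖b‖ ^ q • b = ‖a‖ ^ q • (a - b) + (‖a‖ ^ q - ‖b‖ ^ q) • b := by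
    rw [smul_sub, sub_smul]; abel
  have hcorr : ‖b‖ * (‖a‖ ^ q - ‖b‖ ^ q) ≤ q * ‖a‖ ^ q * ‖a - b‖ :=
    (mul_rpow_sub_rpow_le hq (norm_nonneg b) hba).trans (by gcongr; exact norm_sub_norm_le a b)
  calc ‖‖a‖ ^ q • a - ‖b‖ ^ q • b‖
      ≤ ‖‖a‖ ^ q • (a - b)‖ + ‖(‖a‖ ^ q - ‖b‖ ^ q) • b‖ := hsplit ▸ norm_add_le _ _
    _ = ‖a‖ ^ q * ‖a - b‖ + ‖b‖ * (‖a‖ ^ q - ‖b‖ ^ q) := by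
      rw [norm_smul, norm_smul, norm_of_nonneg (rpow_nonneg (norm_nonneg a) q),
        norm_of_nonneg (sub_nonneg.mpr hpow), mul_comm _ ‖b‖]
    _ ≤ ‖a‖ ^ q * ‖a - b‖ + q * ‖a‖ ^ q * ‖a - b‖ := add_le_add_right hcorr _
    _ = (q + 1) * ‖a‖ ^ q * ‖a - b‖ := by ring

lemma norm_rpow_smul_sub_rpow_smul_le {q : ℝ} (hq : 0 ≤ q) (a b : E) :
    ‖‖a‖ ^ q • a - ‖b‖ ^ q • b‖ ≤ (q + 1) * (‖a‖ + ‖b‖) ^ q * ‖a - b‖ := by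
  wlog hba : ‖b‖ ≤ ‖a‖ generalizing a b
  · have h := this b a (le_of_not_ge hba)
    rwa [← norm_neg, neg_sub, add_comm ‖b‖, norm_sub_rev b a] at h
  calc ‖‖a‖ ^ q • a - ‖b‖ ^ q • b‖ ≤ (q + 1) * ‖a‖ ^ q * ‖a - b‖ :=
        norm_rpow_smul_sub_rpow_smul_le_of_norm_le hq hba
    _ ≤ (q + 1) * (‖a‖ + ‖b‖) ^ q * ‖a - b‖ := by
        gcongr
        exact le_add_of_nonneg_right (norm_nonneg b)

end NormedSpace

theorem pLaplace_flux_local_lipschitz (n : ℕ) (p : ℝ) (hp : 2 ≤ p)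
    (a b : EuclideanSpace ℝ (Fin n)) :
    ‖(‖a‖ ^ (p - 2) • a - ‖b‖ ^ (p - 2) • b : EuclideanSpace ℝ (Fin n))‖ ≤
      (p - 1) * (‖a‖ + ‖b‖) ^ (p - 2) * ‖a - b‖ := by
  have h := norm_rpow_smul_sub_rpow_smul_le (sub_nonneg.mpr hp) a b
  rwa [show p - 2 + 1 = p - 1 by ring] at h
end
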